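/- arXiv:1512.04204 — 3 statements merged into one kernel-verified Lean document; each statement's English description precedes it below -/
import Mathlib

section
/- For m ≥ 4 and n_1 = 2m+1, n_2 = 2m+3, n_3 = 2m^2+m−2, n_4 = 2m^2+m−1: the element m·n_2 = n_1 + n_4 lies in n_1 + S, but there do not exist nonnegative integers w_1 > 0, w_2, w_3, w_4 with m·n_2 = w_1 n_1 + w_2 n_2 + w_3 n_3 + w_4 n_4 and m ≤ w_1 + w_2 + w_3 + w_4; hence the tangent cone of the corresponding monomial curve is not Cohen-Macaulay (via Herzog's criterion). -/
/-- For `m ≥ 4` the element `m·n_2 = n_1 + n_4` lies in `n_1 + S`, but Herzog's condition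
fails for it; hence the tangent cone of the corresponding monomial curve is not
Cohen–Macaulay. -/
theorem stmt_8 (m : ℕ) (hm : 4 ≤ m)
    (n1 n2 n3 n4 : ℕ)
    (h1 : n1 = 2 * m + 1) (h2 : n2 = 2 * m + 3)
    (h3 : n3 = 2 * m ^ 2 + m - 2) (h4 : n4 = 2 * m ^ 2 + m - 1) :
    m * n2 = n1 + n4 ∧
    (∃ s1 s2 s3 s4 : ℕ, m * n2 = n1 + (s1 * n1 + s2 * n2 + s3 * n3 + s4 * n4)) ∧
    ¬ ∃ w1 w2 w3 w4 : ℕ, 0 < w1 ∧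
        m * n2 = w1 * n1 + w2 * n2 + w3 * n3 + w4 * n4 ∧
        m ≤ w1 + w2 + w3 + w4 := by
  obtain ⟨k, rfl⟩ : ∃ k, m = k + 4 := ⟨m - 4, by omega⟩
  have h3' : n3 = 2 * k ^ 2 + 17 * k + 34 := by
    rw [h3, Nat.sub_eq_iff_eq_add (by nlinarith)]; ring
  have h4' : n4 = 2 * k ^ 2 + 17 * k + 35 := by
    rw [h4, Nat.sub_eq_iff_eq_add (by nlinarith)]; ring
  refine ⟨by rw [h1, h2, h4']; ring, ⟨0, 0, 0, 1, by rw [h1, h2, h3', h4']; ring⟩, ?_⟩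
  rintro ⟨w1, w2, w3, w4, hw1, heq, hsum⟩
  rw [h1, h2, h3', h4'] at heq
  have hb3 : w3 ≤ 1 := by
    by_contra h
    push_neg at h
    have hp : 2 * (2 * k ^ 2 + 17 * k + 34) ≤ w3 * (2 * k ^ 2 + 17 * k + 34) :=
      Nat.mul_le_mul_right _ h
    linarith [heq, hp, Nat.zero_le (w1*(2*(k+4)+1)), Nat.zero_le (w2*(2*(k+4)+3)),
      Nat.zero_le (w4*(2*k^2+17*k+35)), Nat.zero_le (k^2)]
  have hb4 : w4 ≤ 1 := by
    by_contra h
    push_neg at h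
    have hp : 2 * (2 * k ^ 2 + 17 * k + 35) ≤ w4 * (2 * k ^ 2 + 17 * k + 35) :=
      Nat.mul_le_mul_right _ h
    linarith [heq, hp, Nat.zero_le (w1*(2*(k+4)+1)), Nat.zero_le (w2*(2*(k+4)+3)),
      Nat.zero_le (w3*(2*k^2+17*k+34)), Nat.zero_le (k^2)]
  interval_cases w3 <;> interval_cases w4
  · -- w3 = 0, w4 = 0
    rcases Nat.lt_or_ge (w1 + w2) (k + 5) with h | h
    · have he : w1 + w2 = k + 4 := by omega
      have he2 : k * (w1 + w2) = k * (k + 4) := by rw [he]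
      linarith [heq, he, he2, hw1]
    · have hp : (k + 5) * (2 * k + 9) ≤ (w1 + w2) * (2 * k + 9) :=
        Nat.mul_le_mul_right _ h
      linarith [heq, hp]
  · -- w3 = 0, w4 = 1
    have h : k + 3 ≤ w1 + w2 := by omega
    have hp : (k + 3) * (2 * k + 9) ≤ (w1 + w2) * (2 * k + 9) :=
      Nat.mul_le_mul_right _ h
    linarith [heq, hp, Nat.zero_le w2, Nat.zero_le (k^2)]
  · -- w3 = 1, w4 = 0
    have h : k + 3 ≤ w1 + w2 := by omega
    have hp : (k + 3) * (2 * k + 9) ≤ (w1 + w2) * (2 * k + 9) :=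
      Nat.mul_le_mul_right _ h
    linarith [heq, hp, Nat.zero_le w2, Nat.zero_le (k^2)]
  · -- w3 = 1, w4 = 1
    linarith [heq, Nat.zero_le (w1*(2*(k+4)+1)), Nat.zero_le (w2*(2*(k+4)+3)),
      Nat.zero_le (k^2)]
end

section
/- Let K[x_1,x_2,x_3,x_4] with the ideal J_3 = ⟨x_3², x_4², x_2^m x_4, x_1^{m+2} x_3, x_2^{2m+1}⟩ for an integer m ≥ 1. Then the numerator of the Hilbert series of K[x_1,...,x_4]/J_3 (with respect to the standard grading, written over (1−t)^4) equals (1−t)^3 (1 + t − t^{m+3})(1 + 2t + ⋯ + 2t^m + t^{m+1} + ⋯ + t^{2m}). -/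
open MvPolynomial PowerSeries

/-- The Hilbert function of the quotient by a monomial ideal: the number of monomials of
total degree `n` not lying in the ideal. -/
noncomputable def monomialHF {K : Type*} [Field K] {d : ℕ}
    (I : Ideal (MvPolynomial (Fin d) K)) (n : ℕ) : ℕ :=
  {u : Fin d → ℕ | (∑ i, u i) = n ∧
    (monomial (Finsupp.equivFunOnFinite.symm u) (1 : K)) ∉ I}.ncard

/-!
Every generator of `J₃` involves only `x₁, x₃` or only `x₂, x₄`, so a monomial lies outside `J₃`
exactly when its `(x₁, x₃)`-part lies outside `⟨x₃², x₁^{m+2} x₃⟩` and its `(x₂, x₄)`-part lies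
outside `⟨x₄², x₂^m x₄, x₂^{2m+1}⟩`. Counting degree by degree, the Hilbert series of the quotient
is the product of the Hilbert series of these two quotients: `(1 + t - t^{m+3}) / (1 - t)`, from
the Hilbert function `1, 2, …, 2, 1, 1, …`, and the polynomial
`1 + 2t + ⋯ + 2t^m + t^{m+1} + ⋯ + t^{2m}`.
-/

open Finset

theorem MvPolynomial.monomial_one_mem_ideal_span_monomial_image {σ R : Type*} [CommSemiring R]
    [Nontrivial R] {u : σ →₀ ℕ} {s : Set (σ →₀ ℕ)} :
    monomial u (1 : R) ∈ Ideal.span ((fun s => monomial s (1 : R)) '' s) ↔ ∃ si ∈ s, si ≤ u := by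
  classical
  simp [mem_ideal_span_monomial_image, support_monomial]

section Interleave

def interleave (pq : (ℕ × ℕ) × (ℕ × ℕ)) : Fin 4 → ℕ := ![pq.1.1, pq.2.1, pq.1.2, pq.2.2]

theorem interleave_injective : Function.Injective interleave := by
  rintro ⟨⟨a, c⟩, ⟨b, d⟩⟩ ⟨⟨a', c'⟩, ⟨b', d'⟩⟩ h
  have h0 := congrFun h 0
  have h1 := congrFun h 1
  have h2 := congrFun h 2
  have h3 := congrFun h 3
  simp_all [interleave]

variable (P Q : ℕ × ℕ → Prop) [DecidablePred P] [DecidablePred Q]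

theorem ncard_split_eq_sum (n : ℕ) :
    {u : Fin 4 → ℕ | ∑ i, u i = n ∧ P (u 0, u 2) ∧ Q (u 1, u 3)}.ncard =
      ∑ jk ∈ antidiagonal n, #{p ∈ antidiagonal jk.1 | P p} * #{q ∈ antidiagonal jk.2 | Q q} := by
  have hset : {u : Fin 4 → ℕ | ∑ i, u i = n ∧ P (u 0, u 2) ∧ Q (u 1, u 3)} =
      ((antidiagonal n).biUnion fun jk =>
        {p ∈ antidiagonal jk.1 | P p} ×ˢ {q ∈ antidiagonal jk.2 | Q q}).image interleave := by
    ext u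
    simp only [Set.mem_ofPred_eq, coe_image, coe_biUnion, mem_coe, HasAntidiagonal.mem_antidiagonal,
      coe_product, coe_filter, Set.mem_image, Set.mem_iUnion, Set.mem_prod, Fin.sum_univ_four]
    constructor
    · rintro ⟨hsum, hP, hQ⟩
      refine ⟨((u 0, u 2), (u 1, u 3)),
        ⟨(u 0 + u 2, u 1 + u 3), by omega, ⟨rfl, hP⟩, ⟨rfl, hQ⟩⟩, ?_⟩
      funext i
      fin_cases i <;> rfl
    · rintro ⟨⟨⟨a, c⟩, ⟨b, d⟩⟩, ⟨⟨j, k⟩, hjk, ⟨rfl, hP⟩, ⟨rfl, hQ⟩⟩, rfl⟩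
      exact ⟨by simp [interleave] at hjk ⊢; omega, hP, hQ⟩
  rw [hset, Set.ncard_coe_finset, card_image_of_injective _ interleave_injective, card_biUnion]
  · simp only [card_product]
  · intro x _ y _ hxy
    refine disjoint_left.mpr fun pq hx hy => hxy ?_
    simp only [mem_product, mem_filter, HasAntidiagonal.mem_antidiagonal] at hx hy
    ext <;> omega

theorem mk_ncard_split_eq_mul :
    PowerSeries.mk (fun n =>
        ({u : Fin 4 → ℕ | ∑ i, u i = n ∧ P (u 0, u 2) ∧ Q (u 1, u 3)}.ncard : ℤ)) =
      PowerSeries.mk (fun j => (#{p ∈ antidiagonal j | P p} : ℤ)) *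
        PowerSeries.mk (fun k => (#{q ∈ antidiagonal k | Q q} : ℤ)) := by
  ext n
  simp [PowerSeries.coeff_mul, ncard_split_eq_sum]

end Interleave

/-- The variable `xᵢ` of the paper is `X (i - 1)`. -/
noncomputable abbrev J3 (R : Type*) [CommSemiring R] (m : ℕ) : Ideal (MvPolynomial (Fin 4) R) :=
  Ideal.span {MvPolynomial.X 2 ^ 2, MvPolynomial.X 3 ^ 2, MvPolynomial.X 1 ^ m * MvPolynomial.X 3,
    MvPolynomial.X 0 ^ (m + 2) * MvPolynomial.X 2, MvPolynomial.X 1 ^ (2 * m + 1)}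

theorem J3_eq_span_monomial_image (R : Type*) [CommSemiring R] (m : ℕ) :
    J3 R m = Ideal.span ((fun s => MvPolynomial.monomial s (1 : R)) ''
      {Finsupp.single 2 2, Finsupp.single 3 2, Finsupp.single 1 m + Finsupp.single 3 1,
        Finsupp.single 0 (m + 2) + Finsupp.single 2 1, Finsupp.single 1 (2 * m + 1)}) := by
  simp only [J3, Set.image_insert_eq, Set.image_singleton, MvPolynomial.X,
    MvPolynomial.monomial_pow, MvPolynomial.monomial_mul, Finsupp.smul_single, smul_eq_mul,
    mul_one, one_pow]

/-- Exponents `(a, c)` of the monomials `x₁^a x₃^c` outside `⟨x₃², x₁^{m+2} x₃⟩`. -/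
abbrev IsStandard13 (m : ℕ) (p : ℕ × ℕ) : Prop := p.2 ≤ 1 ∧ (p.2 = 0 ∨ p.1 < m + 2)

/-- Exponents `(b, d)` of the monomials `x₂^b x₄^d` outside `⟨x₄², x₂^m x₄, x₂^{2m+1}⟩`. -/
abbrev IsStandard24 (m : ℕ) (q : ℕ × ℕ) : Prop := q.2 ≤ 1 ∧ (q.2 = 0 ∨ q.1 < m) ∧ q.1 ≤ 2 * m

theorem monomial_notMem_J3_iff {R : Type*} [CommSemiring R] [Nontrivial R] (m : ℕ)
    (u : Fin 4 → ℕ) :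
    MvPolynomial.monomial (Finsupp.equivFunOnFinite.symm u) (1 : R) ∉ J3 R m ↔
      IsStandard13 m (u 0, u 2) ∧ IsStandard24 m (u 1, u 3) := by
  rw [J3_eq_span_monomial_image, monomial_one_mem_ideal_span_monomial_image]
  simp [Finsupp.le_def, Fin.forall_fin_succ]
  omega

theorem card_filter_isStandard13 (m j : ℕ) :
    #{p ∈ antidiagonal j | IsStandard13 m p} = if j = 0 then 1 else if j ≤ m + 2 then 2 else 1 := by
  have : {p ∈ antidiagonal j | IsStandard13 m p} =
      if j = 0 then {(0, 0)} else if j ≤ m + 2 then {(j, 0), (j - 1, 1)} else {(j, 0)} := by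
    ext ⟨a, c⟩
    simp only [mem_filter, HasAntidiagonal.mem_antidiagonal]
    split_ifs <;> simp only [mem_insert, mem_singleton, Prod.mk.injEq] <;> omega
  rw [this]
  split_ifs <;> simp

theorem card_filter_isStandard24 (m k : ℕ) :
    #{q ∈ antidiagonal k | IsStandard24 m q} =
      if k ≤ 2 * m then (if k = 0 then 1 else if k ≤ m then 2 else 1) else 0 := by
  have : {q ∈ antidiagonal k | IsStandard24 m q} =
      if k ≤ 2 * m then (if k = 0 then {(0, 0)} else if k ≤ m then {(k, 0), (k - 1, 1)}
        else {(k, 0)}) else ∅ := by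
    ext ⟨b, d⟩
    simp only [mem_filter, HasAntidiagonal.mem_antidiagonal]
    split_ifs <;> simp only [mem_insert, mem_singleton, Prod.mk.injEq, notMem_empty, iff_false] <;>
      omega
  rw [this]
  split_ifs <;> simp

theorem mk_card_filter_isStandard13_mul_one_sub_X (m : ℕ) :
    PowerSeries.mk (fun j => (#{p ∈ antidiagonal j | IsStandard13 m p} : ℤ)) *
        (1 - PowerSeries.X) =
      1 + PowerSeries.X - PowerSeries.X ^ (m + 3) := by
  ext (_ | n)
  · simp [card_filter_isStandard13]
  · simp [mul_sub, PowerSeries.coeff_succ_mul_X, PowerSeries.coeff_X, PowerSeries.coeff_X_pow,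
      card_filter_isStandard13]
    split_ifs <;> omega

theorem mk_card_filter_isStandard24 (m : ℕ) :
    PowerSeries.mk (fun k => (#{q ∈ antidiagonal k | IsStandard24 m q} : ℤ)) =
      ∑ k ∈ range (2 * m + 1),
        (if k = 0 then 1 else if k ≤ m then 2 else (1 : ℤ)) • PowerSeries.X ^ k := by
  ext n
  simp only [PowerSeries.coeff_mk, card_filter_isStandard24, map_sum, map_zsmul,
    PowerSeries.coeff_X_pow, smul_eq_mul, mul_ite, mul_one, mul_zero, sum_ite_eq, mem_range]
  split_ifs <;> first | rfl | omega

theorem stmt_9_general {K : Type*} [Field K] (m : ℕ) :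
    (PowerSeries.mk fun n => (monomialHF (Ideal.span
        ({MvPolynomial.X 2 ^ 2, MvPolynomial.X 3 ^ 2, MvPolynomial.X 1 ^ m * MvPolynomial.X 3,
          MvPolynomial.X 0 ^ (m + 2) * MvPolynomial.X 2, MvPolynomial.X 1 ^ (2 * m + 1)} :
          Set (MvPolynomial (Fin 4) K))) n : ℤ)) *
      (1 - PowerSeries.X) ^ 4 =
    (1 - PowerSeries.X) ^ 3 * (1 + PowerSeries.X - PowerSeries.X ^ (m + 3)) *
      (∑ k ∈ Finset.range (2 * m + 1),
        (if k = 0 then 1 else if k ≤ m then 2 else (1 : ℤ)) • PowerSeries.X ^ k) := by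
  have hHF : (PowerSeries.mk fun n => (monomialHF (J3 K m) n : ℤ)) =
      PowerSeries.mk (fun j => (#{p ∈ antidiagonal j | IsStandard13 m p} : ℤ)) *
        PowerSeries.mk (fun k => (#{q ∈ antidiagonal k | IsStandard24 m q} : ℤ)) := by
    simp only [monomialHF, monomial_notMem_J3_iff]
    exact mk_ncard_split_eq_mul _ _
  rw [hHF, ← mk_card_filter_isStandard13_mul_one_sub_X, ← mk_card_filter_isStandard24]
  ring

/-- The numerator of the Hilbert series of `K[x₁,…,x₄]/J₃`, written over `(1-t)⁴`, equals
`(1-t)³(1+t-t^{m+3})(1+2t+⋯+2t^m+t^{m+1}+⋯+t^{2m})`. -/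
theorem stmt_9 {K : Type*} [Field K] (m : ℕ) (hm : 1 ≤ m) :
    (PowerSeries.mk fun n => (monomialHF (Ideal.span
        ({MvPolynomial.X 2 ^ 2, MvPolynomial.X 3 ^ 2, MvPolynomial.X 1 ^ m * MvPolynomial.X 3,
          MvPolynomial.X 0 ^ (m + 2) * MvPolynomial.X 2, MvPolynomial.X 1 ^ (2 * m + 1)} :
          Set (MvPolynomial (Fin 4) K))) n : ℤ)) *
      (1 - PowerSeries.X) ^ 4 =
    (1 - PowerSeries.X) ^ 3 * (1 + PowerSeries.X - PowerSeries.X ^ (m + 3)) *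
      (∑ k ∈ Finset.range (2 * m + 1),
        (if k = 0 then 1 else if k ≤ m then 2 else (1 : ℤ)) • PowerSeries.X ^ k) :=
  stmt_9_general m
end

section
/- For n_1=49, n_2=63, n_3=65, n_4=78 and the semigroup S they generate: for every m of the form u_2·63 + u_3·65 + u_4·78 with 0 ≤ u_2 < 7, u_3 ≥ 6, 0 ≤ u_4 < 5 and m ∈ 49 + S, there exist nonnegative integers w_1 > 0, w_2, w_3, w_4 with m = 49w_1 + 63w_2 + 65w_3 + 78w_4 and u_2 + u_3 + u_4 ≤ w_1 + w_2 + w_3 + w_4. (Use the relations 7·65 = 8·49 + 63, 63 + 6·65 = 5·49 + 2·65 + 78, and 6·65 + 78 = 3·49 + 2·63 + 3·65.) -/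
set_option maxHeartbeats 1000000


theorem stmt_14 :
    ∀ u2 u3 u4 : ℕ, u2 < 7 → 6 ≤ u3 → u4 < 5 →
      (∃ s1 s2 s3 s4 : ℕ,
        u2 * 63 + u3 * 65 + u4 * 78 = 49 + (s1 * 49 + s2 * 63 + s3 * 65 + s4 * 78)) →
      ∃ w1 w2 w3 w4 : ℕ, 0 < w1 ∧
        u2 * 63 + u3 * 65 + u4 * 78 = w1 * 49 + w2 * 63 + w3 * 65 + w4 * 78 ∧
        u2 + u3 + u4 ≤ w1 + w2 + w3 + w4 := by
  intro u2 u3 u4 h2 h3 h4 ⟨s1, s2, s3, s4, hs⟩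
  by_cases hu4 : 1 ≤ u4
  · -- use 6·65 + 78 = 3·49 + 2·63 + 3·65
    exact ⟨3, u2 + 2, u3 - 3, u4 - 1, by omega, by omega, by omega⟩
  · by_cases hu2 : 1 ≤ u2
    · -- use 63 + 6·65 = 5·49 + 2·65 + 78
      exact ⟨5, u2 - 1, u3 - 4, 1, by omega, by omega, by omega⟩
    · by_cases hu3 : 7 ≤ u3
      · -- use 7·65 = 8·49 + 63
        exact ⟨8, 1, u3 - 7, 0, by omega, by omega, by omega⟩
      · -- u2 = 0, u4 = 0, u3 = 6: 390 - 49 = 341 is not in S, contradiction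
        exfalso
        have e2 : u2 = 0 := by omega
        have e4 : u4 = 0 := by omega
        have e3 : u3 = 6 := by omega
        subst e2 e4 e3
        have b1 : s1 ≤ 6 := by omega
        have b2 : s2 ≤ 5 := by omega
        have b3 : s3 ≤ 5 := by omega
        have b4 : s4 ≤ 4 := by omega
        interval_cases s4 <;> omega
end
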